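/- arXiv:1406.6718 — 3 statements merged into one kernel-verified Lean document; each statement's English description precedes it below -/
import Mathlib

section
/- Let G be a torsion-free group and k ≥ 1 an integer. If elements y₀, y₁, y₂ of G satisfy y₀^(k+1) = y₁^k, y₁^(k+1) = y₂^k, and y₂^(k+1) = y₀^k, then y₀ = y₁ = y₂ = 1. -/
/-- In a torsion-free group, the cyclic system of relations
`yᵢ^(k+1) = yᵢ₊₁^k` (indices mod 3) forces all `yᵢ` to be trivial. -/
theorem torsion_free_cyclic_power_relations {G : Type*} [Group G]
    (htf : ∀ (g : G) (n : ℕ), 0 < n → g ^ n = 1 → g = 1)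
    (k : ℕ) (hk : 1 ≤ k) (y₀ y₁ y₂ : G)
    (h0 : y₀ ^ (k + 1) = y₁ ^ k)
    (h1 : y₁ ^ (k + 1) = y₂ ^ k)
    (h2 : y₂ ^ (k + 1) = y₀ ^ k) :
    y₀ = 1 ∧ y₁ = 1 ∧ y₂ = 1 := by
  -- y₁ ^ ((k+1)^2) = y₀ ^ (k^2)
  have e1 : y₁ ^ ((k + 1) * (k + 1)) = y₀ ^ (k * k) := by
    calc y₁ ^ ((k + 1) * (k + 1)) = (y₁ ^ (k + 1)) ^ (k + 1) := by rw [pow_mul]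
      _ = (y₂ ^ k) ^ (k + 1) := by rw [h1]
      _ = (y₂ ^ (k + 1)) ^ k := by rw [← pow_mul, mul_comm, pow_mul]
      _ = (y₀ ^ k) ^ k := by rw [h2]
      _ = y₀ ^ (k * k) := by rw [pow_mul]
  have e0 : y₀ ^ ((k + 1) * ((k + 1) * (k + 1))) = y₀ ^ (k * (k * k)) := by
    calc y₀ ^ ((k + 1) * ((k + 1) * (k + 1)))
        = (y₀ ^ (k + 1)) ^ ((k + 1) * (k + 1)) := by rw [pow_mul]
      _ = (y₁ ^ k) ^ ((k + 1) * (k + 1)) := by rw [h0]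
      _ = (y₁ ^ ((k + 1) * (k + 1))) ^ k := by
          rw [← pow_mul, mul_comm, pow_mul]
      _ = (y₀ ^ (k * k)) ^ k := by rw [e1]
      _ = y₀ ^ (k * (k * k)) := by rw [← pow_mul, mul_comm]
  set a := k * (k * k) with ha
  set b := (k + 1) * ((k + 1) * (k + 1)) with hb
  have hd : 0 < b - a := by
    have : a < b := by
      have hkk : k < k + 1 := Nat.lt_succ_self k
      calc a = k * (k * k) := rfl
        _ < (k + 1) * ((k + 1) * (k + 1)) := by
            apply Nat.mul_lt_mul_of_lt_of_le hkk
            · exact Nat.mul_le_mul (le_of_lt hkk) (le_of_lt hkk)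
            · positivity
      
    omega
  have hsum : y₀ ^ a * y₀ ^ (b - a) = y₀ ^ a * 1 := by
    rw [← pow_add, mul_one]
    have : a + (b - a) = b := by omega
    rw [this, e0]
  have hy0 : y₀ = 1 := htf y₀ (b - a) hd (mul_left_cancel hsum)
  have hy1 : y₁ = 1 := htf y₁ k hk (by rw [← h0, hy0, one_pow])
  have hy2 : y₂ = 1 := htf y₂ k hk (by rw [← h1, hy1, one_pow])
  exact ⟨hy0, hy1, hy2⟩
end

section
/- Let r, p, q be integers with r ≥ 2, r dividing p, r < p, p, q coprime, q ≥ 3, and suppose integers p' = -1 and q' satisfy p'q + q'p = 1 with 0 < q' < q (equivalently q'p = q + 1). Set m = p/r + 1. Then rp'/p < -1/m always holds, and q'/q < 1/m unless r = 2, p = 4, and q = 3. -/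
/-- Key numerical estimate for the horizontal foliation condition, subcase
`p' = -1`: with `m = p/r + 1`, the inequality `rp'/p < -1/m` always holds,
and `q'/q < 1/m` unless `r = 2`, `p = 4` and `q = 3`. -/
theorem foliation_estimate_subcase_b (r p q q' m : ℤ)
    (hr : 2 ≤ r) (hrp : r ∣ p) (hrltp : r < p) (hq : 3 ≤ q)
    (hcop : IsCoprime p q) (hrel : (-1) * q + q' * p = 1)
    (hq' : 0 < q') (hq'' : q' < q)
    (hm : r * m = p + r) :
    (r * (-1) : ℚ) / p < -1 / m ∧
    (¬ (r = 2 ∧ p = 4 ∧ q = 3) → (q' : ℚ) / q < 1 / m) := by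
  have hr0 : (0:ℤ) < r := by linarith
  obtain ⟨k, hk⟩ := hrp
  have hk2 : 2 ≤ k := by nlinarith
  have hp2r : 2 * r ≤ p := by nlinarith
  have hp0 : (0:ℤ) < p := by linarith
  have hm3 : 3 ≤ m := by nlinarith
  have hm0 : (0:ℤ) < m := by linarith
  have hq0 : (0:ℤ) < q := by linarith
  constructor
  · rw [div_lt_div_iff₀ (by exact_mod_cast hp0) (by exact_mod_cast hm0)]
    have hmQ : (r:ℚ) * m = p + r := by exact_mod_cast hm
    have hrQ : (0:ℚ) < r := by exact_mod_cast hr0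
    push_cast
    nlinarith [hmQ, hrQ]
  · intro h
    have hqp : q' * p = q + 1 := by linarith
    have key : (q + 1) * (p + r) < q * p * r := by
      rcases eq_or_lt_of_le hr with hr2 | hr3
      · -- r = 2
        subst hr2
        rcases eq_or_lt_of_le hp2r with hp4 | hp5
        · -- p = 4
          have hp4' : p = 4 := by omega
          have hq3 : q ≠ 3 := fun hq3 => h ⟨rfl, hp4', hq3⟩
          have : 4 ≤ q := by omega
          subst hp4'; nlinarith
        · -- p ≥ 5, even, so p ≥ 6
          have hp6 : 6 ≤ p := by omega
          nlinarith [(p - 2) * (q - 1)]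
      · -- r ≥ 3, p ≥ 2r ≥ 6
        have hp6 : 6 ≤ p := by linarith
        nlinarith [mul_pos hq0 hp0, mul_nonneg (mul_nonneg hq0.le hp0.le) (by linarith : (0:ℤ) ≤ r - 2)]
    have key2 : q' * m < q := by
      have h1 : q' * m * (p * r) < q * (p * r) := by
        calc q' * m * (p * r) = (r * m) * (q' * p) := by ring
        _ = (p + r) * (q + 1) := by rw [hm, hqp]
        _ < q * p * r := by linarith
        _ = q * (p * r) := by ring
      exact lt_of_mul_lt_mul_right h1 (by positivity)
    rw [div_lt_div_iff₀ (by exact_mod_cast hq0) (by exact_mod_cast hm0)]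
    have : ((q':ℚ)) * m < q := by exact_mod_cast key2
    push_cast
    linarith
end

section
/- Suppose k, ℓ, m ≥ 1 are integers and G is a group generated by elements x₀, x₁, x₂, y₀, y₁, y₂ subject to (for each i ∈ ℤ/3) the relations (xᵢyᵢ⁻¹)^m · xᵢ · (xᵢ₊₁yᵢ₊₁⁻¹)^(-m) · yᵢ₊₁^(k+1) · yᵢ^(-(k+1)) = 1 and yᵢ^(k+1) · yᵢ₊₁^(-k) · xᵢ₊₁^(-(ℓ+1)) · xᵢ^ℓ = 1, together with x₀x₁x₂ = 1 and y₀y₁y₂ = 1. If G is non-trivial and admits an automorphism sending xᵢ to xᵢ₊₁ and yᵢ to yᵢ₊₁ for all i, then G is not left-orderable. -/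
section PLOHelpers

variable {G : Type*} [Group G] (lt : G → G → Prop)
  (htrans : ∀ a b c : G, lt a b → lt b c → lt a c)
  (hinv : ∀ a b c : G, lt a b → lt (c * a) (c * b))

include htrans hinv

private lemma PLO_pos_mul {p q : G} (hp : lt 1 p) (hq : lt 1 q) : lt 1 (p * q) := by
  have h := hinv 1 q p hq
  rw [mul_one] at h
  exact htrans _ _ _ hp h

private lemma PLO_neg_mul {p q : G} (hp : lt p 1) (hq : lt q 1) : lt (p * q) 1 := by
  have h := hinv q 1 p hq
  rw [mul_one] at h
  exact htrans _ _ _ h hp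

private lemma PLO_pos_inv {p : G} (hp : lt 1 p) : lt p⁻¹ 1 := by
  have h := hinv 1 p p⁻¹ hp
  rw [mul_one, inv_mul_cancel] at h
  exact h

private lemma PLO_neg_inv {p : G} (hp : lt p 1) : lt 1 p⁻¹ := by
  have h := hinv p 1 p⁻¹ hp
  rw [mul_one, inv_mul_cancel] at h
  exact h

private lemma PLO_pos_pow {p : G} (hp : lt 1 p) : ∀ n : ℕ, n ≠ 0 → lt 1 (p ^ n) := by
  intro n hn
  induction n with
  | zero => exact absurd rfl hn
  | succ n ih =>
    rcases Nat.eq_zero_or_pos n with h0 | h0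
    · subst h0; simpa using hp
    · rw [pow_succ]
      exact PLO_pos_mul lt htrans hinv (ih h0.ne') hp

private lemma PLO_neg_pow {p : G} (hp : lt p 1) : ∀ n : ℕ, n ≠ 0 → lt (p ^ n) 1 := by
  intro n hn
  induction n with
  | zero => exact absurd rfl hn
  | succ n ih =>
    rcases Nat.eq_zero_or_pos n with h0 | h0
    · subst h0; simpa using hp
    · rw [pow_succ]
      exact PLO_neg_mul lt htrans hinv (ih h0.ne') hp

private lemma pretzel_core
    (hirr : ∀ g : G, ¬ lt g g)
    (htri : ∀ a b : G, lt a b ∨ a = b ∨ lt b a)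
    {k l m : ℕ} (hk : k ≠ 0) (hl : l ≠ 0) (hm : m ≠ 0)
    (x y : ZMod 3 → G)
    (hrel1 : ∀ i : ZMod 3,
      (x i * (y i)⁻¹) ^ m * x i * ((x (i + 1) * (y (i + 1))⁻¹) ^ m)⁻¹ *
        (y (i + 1)) ^ (k + 1) * ((y i) ^ (k + 1))⁻¹ = 1)
    (hrel2 : ∀ i : ZMod 3,
      (y i) ^ (k + 1) * ((y (i + 1)) ^ k)⁻¹ * ((x (i + 1)) ^ (l + 1))⁻¹ *
        (x i) ^ l = 1)
    (a b c : ZMod 3) (hab : b = a + 1) (hbc : c = b + 1) (hca : a = c + 1)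
    (hy3 : y a * y b * y c = 1)
    (hxa : lt 1 (x a)) (hxb : lt 1 (x b)) (hxc : lt (x c) 1)
    (hya : y a ≠ 1) (hyb : y b ≠ 1) (hyc : y c ≠ 1) : False := by
  have rel1b := hrel1 b
  rw [← hbc] at rel1b
  have rel1c := hrel1 c
  rw [← hca] at rel1c
  have rel2b := hrel2 b
  rw [← hbc] at rel2b
  have rel2c := hrel2 c
  rw [← hca] at rel2c
  rcases htri 1 (y c) with tc | tc | tc
  · -- y c > 1
    rcases htri (y a) 1 with ta | ta | ta
    · -- y a < 1 : relator rel1c is a product of negatives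
      have f1 : lt ((x c * (y c)⁻¹) ^ m) 1 :=
        PLO_neg_pow lt htrans hinv
          (PLO_neg_mul lt htrans hinv hxc (PLO_pos_inv lt htrans hinv tc)) m hm
      have f3 : lt (((x a * (y a)⁻¹) ^ m))⁻¹ 1 :=
        PLO_pos_inv lt htrans hinv
          (PLO_pos_pow lt htrans hinv
            (PLO_pos_mul lt htrans hinv hxa (PLO_neg_inv lt htrans hinv ta)) m hm)
      have f4 : lt ((y a) ^ (k + 1)) 1 :=
        PLO_neg_pow lt htrans hinv ta (k + 1) (Nat.succ_ne_zero k)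
      have f5 : lt (((y c) ^ (k + 1)))⁻¹ 1 :=
        PLO_pos_inv lt htrans hinv
          (PLO_pos_pow lt htrans hinv tc (k + 1) (Nat.succ_ne_zero k))
      have hw : lt ((x c * (y c)⁻¹) ^ m * x c * ((x a * (y a)⁻¹) ^ m)⁻¹ *
          (y a) ^ (k + 1) * ((y c) ^ (k + 1))⁻¹) 1 :=
        PLO_neg_mul lt htrans hinv
          (PLO_neg_mul lt htrans hinv
            (PLO_neg_mul lt htrans hinv
              (PLO_neg_mul lt htrans hinv f1 hxc) f3) f4) f5
      rw [rel1c] at hw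
      exact hirr 1 hw
    · exact hya ta
    · rcases htri (y b) 1 with tb | tb | tb
      · -- y b < 1 : relator rel1b is a product of positives
        have f1 : lt 1 ((x b * (y b)⁻¹) ^ m) :=
          PLO_pos_pow lt htrans hinv
            (PLO_pos_mul lt htrans hinv hxb (PLO_neg_inv lt htrans hinv tb)) m hm
        have f3 : lt 1 (((x c * (y c)⁻¹) ^ m))⁻¹ :=
          PLO_neg_inv lt htrans hinv
            (PLO_neg_pow lt htrans hinv
              (PLO_neg_mul lt htrans hinv hxc (PLO_pos_inv lt htrans hinv tc)) m hm)
        have f4 : lt 1 ((y c) ^ (k + 1)) :=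
          PLO_pos_pow lt htrans hinv tc (k + 1) (Nat.succ_ne_zero k)
        have f5 : lt 1 (((y b) ^ (k + 1)))⁻¹ :=
          PLO_neg_inv lt htrans hinv
            (PLO_neg_pow lt htrans hinv tb (k + 1) (Nat.succ_ne_zero k))
        have hw : lt 1 ((x b * (y b)⁻¹) ^ m * x b * ((x c * (y c)⁻¹) ^ m)⁻¹ *
            (y c) ^ (k + 1) * ((y b) ^ (k + 1))⁻¹) :=
          PLO_pos_mul lt htrans hinv
            (PLO_pos_mul lt htrans hinv
              (PLO_pos_mul lt htrans hinv
                (PLO_pos_mul lt htrans hinv f1 hxb) f3) f4) f5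
        rw [rel1b] at hw
        exact hirr 1 hw
      · exact hyb tb
      · have hw : lt 1 (y a * y b * y c) :=
          PLO_pos_mul lt htrans hinv (PLO_pos_mul lt htrans hinv ta tb) tc
        rw [hy3] at hw
        exact hirr 1 hw
  · exact hyc tc.symm
  · -- y c < 1
    rcases htri 1 (y b) with tb | tb | tb
    · -- y b > 1 : relator rel2b is a product of positives
      have f1 : lt 1 ((y b) ^ (k + 1)) :=
        PLO_pos_pow lt htrans hinv tb (k + 1) (Nat.succ_ne_zero k)
      have f2 : lt 1 (((y c) ^ k))⁻¹ :=
        PLO_neg_inv lt htrans hinv (PLO_neg_pow lt htrans hinv tc k hk)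
      have f3 : lt 1 (((x c) ^ (l + 1)))⁻¹ :=
        PLO_neg_inv lt htrans hinv
          (PLO_neg_pow lt htrans hinv hxc (l + 1) (Nat.succ_ne_zero l))
      have f4 : lt 1 ((x b) ^ l) := PLO_pos_pow lt htrans hinv hxb l hl
      have hw : lt 1 ((y b) ^ (k + 1) * ((y c) ^ k)⁻¹ * ((x c) ^ (l + 1))⁻¹ *
          (x b) ^ l) :=
        PLO_pos_mul lt htrans hinv
          (PLO_pos_mul lt htrans hinv (PLO_pos_mul lt htrans hinv f1 f2) f3) f4
      rw [rel2b] at hw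
      exact hirr 1 hw
    · exact hyb tb.symm
    · rcases htri 1 (y a) with ta | ta | ta
      · -- y a > 1 : relator rel2c is a product of negatives
        have f1 : lt ((y c) ^ (k + 1)) 1 :=
          PLO_neg_pow lt htrans hinv tc (k + 1) (Nat.succ_ne_zero k)
        have f2 : lt (((y a) ^ k))⁻¹ 1 :=
          PLO_pos_inv lt htrans hinv (PLO_pos_pow lt htrans hinv ta k hk)
        have f3 : lt (((x a) ^ (l + 1)))⁻¹ 1 :=
          PLO_pos_inv lt htrans hinv
            (PLO_pos_pow lt htrans hinv hxa (l + 1) (Nat.succ_ne_zero l))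
        have f4 : lt ((x c) ^ l) 1 := PLO_neg_pow lt htrans hinv hxc l hl
        have hw : lt ((y c) ^ (k + 1) * ((y a) ^ k)⁻¹ * ((x a) ^ (l + 1))⁻¹ *
            (x c) ^ l) 1 :=
          PLO_neg_mul lt htrans hinv
            (PLO_neg_mul lt htrans hinv (PLO_neg_mul lt htrans hinv f1 f2) f3) f4
        rw [rel2c] at hw
        exact hirr 1 hw
      · exact hya ta.symm
      · have hw : lt (y a * y b * y c) 1 :=
          PLO_neg_mul lt htrans hinv (PLO_neg_mul lt htrans hinv ta tb) tc
        rw [hy3] at hw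
        exact hirr 1 hw

end PLOHelpers

/-- The fundamental group of the 3-fold cyclic branched cover of the pretzel
knot `P(2k+1, 2ℓ+1, 2m+1)` is not left-orderable: any non-trivial group
generated by `x₀, x₁, x₂, y₀, y₁, y₂` satisfying the displayed relations and
admitting the cyclic automorphism is not left-orderable. -/
theorem pretzel_branched_cover_not_leftOrderable {G : Type*} [Group G]
    (k l m : ℕ) (hk : 1 ≤ k) (hl : 1 ≤ l) (hm : 1 ≤ m)
    (x y : ZMod 3 → G)
    (hgen : Subgroup.closure (Set.range x ∪ Set.range y) = ⊤)
    (hrel1 : ∀ i : ZMod 3,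
      (x i * (y i)⁻¹) ^ m * x i * ((x (i + 1) * (y (i + 1))⁻¹) ^ m)⁻¹ *
        (y (i + 1)) ^ (k + 1) * ((y i) ^ (k + 1))⁻¹ = 1)
    (hrel2 : ∀ i : ZMod 3,
      (y i) ^ (k + 1) * ((y (i + 1)) ^ k)⁻¹ * ((x (i + 1)) ^ (l + 1))⁻¹ *
        (x i) ^ l = 1)
    (hx3 : x 0 * x 1 * x 2 = 1) (hy3 : y 0 * y 1 * y 2 = 1)
    (hnt : Nontrivial G)
    (φ : G ≃* G) (hφx : ∀ i, φ (x i) = x (i + 1)) (hφy : ∀ i, φ (y i) = y (i + 1)) :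
    ¬ ∃ lt : G → G → Prop,
      IsStrictTotalOrder G lt ∧ ∀ a b c : G, lt a b → lt (c * a) (c * b) := by
  rintro ⟨lt, hsto, hinv⟩
  haveI := hsto
  have hirr : ∀ g : G, ¬ lt g g := fun g => irrefl_of lt g
  have htrans : ∀ a b c : G, lt a b → lt b c → lt a c :=
    fun a b c h1 h2 => trans_of lt h1 h2
  have htri : ∀ a b : G, lt a b ∨ a = b ∨ lt b a :=
    fun a b => trichotomous_of lt a b
  -- elements of finite order are trivial
  have hfin : ∀ (g : G) (n : ℕ), n ≠ 0 → g ^ n = 1 → g = 1 := by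
    intro g n hn hg
    rcases htri g 1 with h | h | h
    · exfalso
      have := PLO_neg_pow lt htrans hinv h n hn
      rw [hg] at this
      exact hirr 1 this
    · exact h
    · exfalso
      have := PLO_pos_pow lt htrans hinv h n hn
      rw [hg] at this
      exact hirr 1 this
  -- triviality propagates cyclically
  have hcover : ∀ i j : ZMod 3, j = i ∨ j = i + 1 ∨ j = i + 1 + 1 := by decide
  have hxall : ∀ i, x i = 1 → ∀ j, x j = 1 := by
    intro i h j
    have h1 : x (i + 1) = 1 := by rw [← hφx i, h, map_one]
    have h2 : x (i + 1 + 1) = 1 := by rw [← hφx (i + 1), h1, map_one]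
    rcases hcover i j with rfl | rfl | rfl <;> assumption
  have hyall : ∀ i, y i = 1 → ∀ j, y j = 1 := by
    intro i h j
    have h1 : y (i + 1) = 1 := by rw [← hφy i, h, map_one]
    have h2 : y (i + 1 + 1) = 1 := by rw [← hφy (i + 1), h1, map_one]
    rcases hcover i j with rfl | rfl | rfl <;> assumption
  -- if all generators are trivial, G is trivial: contradiction
  have htriv : (∀ i, x i = 1) → (∀ i, y i = 1) → False := by
    intro hx hy
    have hsub : (Set.range x ∪ Set.range y : Set G) ⊆ (⊥ : Subgroup G) := by
      rintro g (⟨i, rfl⟩ | ⟨i, rfl⟩) <;>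
        simp [hx, hy, Subgroup.mem_bot]
    have hle : (⊤ : Subgroup G) ≤ ⊥ := by
      rw [← hgen]
      exact (Subgroup.closure_le _).2 hsub
    obtain ⟨g1, g2, hg⟩ := hnt
    have e1 : g1 = 1 := Subgroup.mem_bot.1 (hle (Subgroup.mem_top g1))
    have e2 : g2 = 1 := Subgroup.mem_bot.1 (hle (Subgroup.mem_top g2))
    exact hg (e1.trans e2.symm)
  -- the power-chain argument
  have pcong : ∀ (g : G) {u v : ℕ}, u = v → g ^ u = g ^ v := by
    intro g u v h; rw [h]
  have hchain : ∀ (z : ZMod 3 → G) (p : ℕ),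
      (∀ i, z i ^ (p + 1) = z (i + 1) ^ p) → z 0 = 1 := by
    intro z p hz
    have e0 := hz 0
    have e1 := hz 1
    have e2 := hz 2
    rw [show ((0 : ZMod 3) + 1) = 1 by decide] at e0
    rw [show ((1 : ZMod 3) + 1) = 2 by decide] at e1
    rw [show ((2 : ZMod 3) + 1) = 0 by decide] at e2
    have key : z 0 ^ ((p + 1) ^ 3) = z 0 ^ (p ^ 3) := by
      calc z 0 ^ ((p + 1) ^ 3)
          = (z 0 ^ (p + 1)) ^ ((p + 1) * (p + 1)) := by
            rw [← pow_mul]; exact pcong _ (by ring)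
        _ = (z 1 ^ p) ^ ((p + 1) * (p + 1)) := by rw [e0]
        _ = (z 1 ^ (p + 1)) ^ (p * (p + 1)) := by
            rw [← pow_mul, ← pow_mul]; exact pcong _ (by ring)
        _ = (z 2 ^ p) ^ (p * (p + 1)) := by rw [e1]
        _ = (z 2 ^ (p + 1)) ^ (p * p) := by
            rw [← pow_mul, ← pow_mul]; exact pcong _ (by ring)
        _ = (z 0 ^ p) ^ (p * p) := by rw [e2]
        _ = z 0 ^ (p ^ 3) := by rw [← pow_mul]; exact pcong _ (by ring)
    have hlt : p ^ 3 < (p + 1) ^ 3 :=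
      Nat.pow_lt_pow_left (Nat.lt_succ_self p) (by norm_num)
    have hmul : z 0 ^ ((p + 1) ^ 3 - p ^ 3) * z 0 ^ (p ^ 3) = 1 * z 0 ^ (p ^ 3) := by
      rw [← pow_add, Nat.sub_add_cancel hlt.le, key, one_mul]
    have h1 : z 0 ^ ((p + 1) ^ 3 - p ^ 3) = 1 := mul_right_cancel hmul
    exact hfin _ _ (by omega) h1
  by_cases hxe : ∃ i, x i = 1
  · -- all x trivial; then the second relations force all y trivial
    obtain ⟨i, hi⟩ := hxe
    have hx1 := hxall i hi
    have hE : ∀ j : ZMod 3, y j ^ (k + 1) = y (j + 1) ^ k := by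
      intro j
      have h := hrel2 j
      rw [hx1 j, hx1 (j + 1)] at h
      simp only [one_pow, inv_one, mul_one] at h
      exact mul_inv_eq_one.mp h
    have hy0 : y 0 = 1 := hchain y k hE
    exact htriv hx1 (hyall 0 hy0)
  · push_neg at hxe
    by_cases hye : ∃ i, y i = 1
    · -- all y trivial; then the second relations force x trivial
      obtain ⟨i, hi⟩ := hye
      have hy1 := hyall i hi
      have hE : ∀ j : ZMod 3, x (j + 1) ^ (l + 1) = x j ^ l := by
        intro j
        have h := hrel2 j
        rw [hy1 j, hy1 (j + 1)] at h
        simp only [one_pow, inv_one, one_mul] at h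
        exact inv_mul_eq_one.mp h
      have hx0 : x 0 = 1 := by
        have hz : ∀ i : ZMod 3, x (-i) ^ (l + 1) = x (-(i + 1)) ^ l := by
          intro i
          have h := hE (-(i + 1))
          rw [show -(i + 1) + 1 = -i from by ring] at h
          exact h
        have := hchain (fun i => x (-i)) l hz
        simpa using this
      exact hxe 0 hx0
    · push_neg at hye
      -- all generators nontrivial: sign analysis
      have hcyc : ∀ a b c : G, a * b * c = 1 → b * c * a = 1 := by
        intro a b c h
        have := congrArg (fun g => a⁻¹ * g * a) h
        simpa [mul_assoc] using this
      have hy31 : y 1 * y 2 * y 0 = 1 := hcyc _ _ _ hy3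
      have hy32 : y 2 * y 0 * y 1 = 1 := hcyc _ _ _ hy31
      -- reversed order
      set lt' : G → G → Prop := fun a b => lt b a with hlt'
      have hirr' : ∀ g : G, ¬ lt' g g := hirr
      have htrans' : ∀ a b c : G, lt' a b → lt' b c → lt' a c :=
        fun a b c h1 h2 => htrans c b a h2 h1
      have htri' : ∀ a b : G, lt' a b ∨ a = b ∨ lt' b a := by
        intro a b
        rcases htri b a with h | h | h
        · exact Or.inl h
        · exact Or.inr (Or.inl h.symm)
        · exact Or.inr (Or.inr h)
      have hinv' : ∀ a b c : G, lt' a b → lt' (c * a) (c * b) :=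
        fun a b c h => hinv b a c h
      rcases htri 1 (x 0) with p0 | e0 | n0
      · rcases htri 1 (x 1) with p1 | e1 | n1
        · rcases htri 1 (x 2) with p2 | e2 | n2
          · -- (+,+,+)
            have hw : lt 1 (x 0 * x 1 * x 2) :=
              PLO_pos_mul lt htrans hinv (PLO_pos_mul lt htrans hinv p0 p1) p2
            rw [hx3] at hw
            exact hirr 1 hw
          · exact hye 2 (hxe 2 e2.symm).elim
          · -- (+,+,-) : base 0, order lt
            exact pretzel_core lt htrans hinv hirr htri
              (by omega) (by omega) (by omega) x y hrel1 hrel2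
              0 1 2 (by decide) (by decide) (by decide) hy3
              p0 p1 n2 (hye 0) (hye 1) (hye 2)
        · exact (hxe 1 e1.symm).elim
        · rcases htri 1 (x 2) with p2 | e2 | n2
          · -- (+,-,+) : base 2, order lt
            exact pretzel_core lt htrans hinv hirr htri
              (by omega) (by omega) (by omega) x y hrel1 hrel2
              2 0 1 (by decide) (by decide) (by decide) hy32
              p2 p0 n1 (hye 2) (hye 0) (hye 1)
          · exact (hxe 2 e2.symm).elim
          · -- (+,-,-) : flipped signs (-,+,+) : base 1, order lt'
            exact pretzel_core lt' htrans' hinv' hirr' htri'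
              (by omega) (by omega) (by omega) x y hrel1 hrel2
              1 2 0 (by decide) (by decide) (by decide) hy31
              n1 n2 p0 (hye 1) (hye 2) (hye 0)
      · exact (hxe 0 e0.symm).elim
      · rcases htri 1 (x 1) with p1 | e1 | n1
        · rcases htri 1 (x 2) with p2 | e2 | n2
          · -- (-,+,+) : base 1, order lt
            exact pretzel_core lt htrans hinv hirr htri
              (by omega) (by omega) (by omega) x y hrel1 hrel2
              1 2 0 (by decide) (by decide) (by decide) hy31
              p1 p2 n0 (hye 1) (hye 2) (hye 0)
          · exact (hxe 2 e2.symm).elim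
          · -- (-,+,-) : flipped (+,-,+) : base 2, order lt'
            exact pretzel_core lt' htrans' hinv' hirr' htri'
              (by omega) (by omega) (by omega) x y hrel1 hrel2
              2 0 1 (by decide) (by decide) (by decide) hy32
              n2 n0 p1 (hye 2) (hye 0) (hye 1)
        · exact (hxe 1 e1.symm).elim
        · rcases htri 1 (x 2) with p2 | e2 | n2
          · -- (-,-,+) : flipped (+,+,-) : base 0, order lt'
            exact pretzel_core lt' htrans' hinv' hirr' htri'
              (by omega) (by omega) (by omega) x y hrel1 hrel2
              0 1 2 (by decide) (by decide) (by decide) hy3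
              n0 n1 p2 (hye 0) (hye 1) (hye 2)
          · exact (hxe 2 e2.symm).elim
          · -- (-,-,-)
            have hw : lt (x 0 * x 1 * x 2) 1 :=
              PLO_neg_mul lt htrans hinv (PLO_neg_mul lt htrans hinv n0 n1) n2
            rw [hx3] at hw
            exact hirr 1 hw
end
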